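/- Let (Y^h_n)_{n=0,…,N} be nonnegative random variables satisfying, for some constants b, C > 0 and all n < N, the recursion 0 ≤ Y^h_{n+1} ≤ (1+bh)Y^h_n + Ch + σ√(Y^h_n h)·W^h_{n+1}, where h = T/N and W^h_{n+1} is a bounded random variable with E[W^h_{n+1} | Y^h_0,…,Y^h_n] = 0 and |W^h_{n+1}| ≤ 2. Then for every p ≥ 1 there exists C_p > 0, depending only on p, b, C, σ, T and Y^h_0, such that sup_{0≤n≤N} E[(Y^h_n)^p] ≤ C_p uniformly in h ≤ T. -/

import Mathlib

/-!
Work with `Z = 1 + Y` and the integer exponent `M = ⌈p⌉₊ + 2`. Expanding `(a + u) ^ M` to second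
order around the drift `a = 1 + (1 + b h) Y + C h ≤ (1 + (b + C) h) Z`, the first-order term
`M a ^ (M - 1) u` in the noise `u = σ √(Y h) W` has mean zero, because `a` is a function of `Y_n`
and `W_{n+1}` is conditionally centred given `Y_0, …, Y_n`; the remainder is `O(h Z ^ M)` because
`u ^ 2 ≤ 4 σ ^ 2 h Z`. Hence `E[Z_{n+1} ^ M] ≤ exp (K h) E[Z_n ^ M]`, which iterates to
`exp (K T) (1 + Y₀) ^ M` since `n h ≤ T`. Integrability costs nothing: since `|W| ≤ 2`, each `Y_n`
is a.s. bounded by a deterministic constant.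
-/

open MeasureTheory Real

theorem add_pow_le_taylor {a u : ℝ} (ha : 0 ≤ a) (hau : 0 ≤ a + u) (n : ℕ) :
    (a + u) ^ (n + 2) ≤ a ^ (n + 2) + (n + 2) * a ^ (n + 1) * u
      + (n + 2).choose 2 * u ^ 2 * (a + |u|) ^ n := by
  induction n with
  | zero => norm_num; nlinarith
  | succ n ih =>
    have hchoose : ((n + 1 + 2).choose 2 : ℝ) = (n + 2).choose 2 + (n + 2) := by
      rw [show n + 1 + 2 = (n + 2) + 1 by ring, Nat.choose_succ_succ, Nat.choose_one_right]
      push_cast; ring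
    have hau' : a + u ≤ a + |u| := by linarith [le_abs_self u]
    have hpow : a ^ (n + 1) ≤ (a + |u|) ^ (n + 1) :=
      pow_le_pow_left₀ ha (by linarith [abs_nonneg u]) _
    calc (a + u) ^ (n + 1 + 2) = (a + u) * (a + u) ^ (n + 2) := by ring
      _ ≤ (a + u) * (a ^ (n + 2) + (n + 2) * a ^ (n + 1) * u
            + (n + 2).choose 2 * u ^ 2 * (a + |u|) ^ n) := mul_le_mul_of_nonneg_left ih hau
      _ = a ^ (n + 3) + (n + 3) * a ^ (n + 2) * u + (n + 2) * u ^ 2 * a ^ (n + 1)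
            + (n + 2).choose 2 * u ^ 2 * ((a + u) * (a + |u|) ^ n) := by ring
      _ ≤ a ^ (n + 3) + (n + 3) * a ^ (n + 2) * u + (n + 2) * u ^ 2 * (a + |u|) ^ (n + 1)
            + (n + 2).choose 2 * u ^ 2 * ((a + |u|) * (a + |u|) ^ n) := by gcongr
      _ = _ := by rw [hchoose]; push_cast; ring

theorem two_mul_sqrt_mul_le_add {x y : ℝ} (hx : 0 ≤ x) (hy : 0 ≤ y) :
    2 * √(x * y) ≤ x + y := by
  have hxy := Real.sq_sqrt (mul_nonneg hx hy)
  nlinarith [sq_nonneg (2 * √(x * y) - (x + y)), Real.sqrt_nonneg (x * y), sq_nonneg (x - y)]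

theorem Real.rpow_le_one_add_pow {y p : ℝ} {k : ℕ} (hy : 0 ≤ y) (hp : 0 ≤ p) (hpk : p ≤ k) :
    y ^ p ≤ (1 + y) ^ k :=
  calc y ^ p ≤ (1 + y) ^ p := Real.rpow_le_rpow hy (by linarith) hp
    _ ≤ (1 + y) ^ (k : ℝ) := Real.rpow_le_rpow_of_exponent_le (by linarith) hpk
    _ = (1 + y) ^ k := Real.rpow_natCast _ _

theorem le_exp_mul_of_le_exp_mul_succ {x : ℕ → ℝ} {κ h T : ℝ} {N : ℕ} (hκ : 0 ≤ κ)
    (hx0 : 0 ≤ x 0) (hh : 0 ≤ h) (hNh : N * h ≤ T)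
    (hstep : ∀ k < N, x (k + 1) ≤ exp (κ * h) * x k) :
    ∀ n ≤ N, x n ≤ exp (κ * T) * x 0 := by
  intro n hn
  calc x n ≤ exp (κ * h) ^ n * x 0 := le_geom (exp_pos _).le n fun k hk => hstep k (by omega)
    _ = exp (κ * (n * h)) * x 0 := by rw [← exp_nat_mul]; ring_nf
    _ ≤ exp (κ * T) * x 0 := by
        have : (n : ℝ) * h ≤ N * h := by gcongr
        gcongr; linarith

def stepGrowth (b C σ T : ℝ) : ℝ := 1 + (b + C) * T + σ * (1 + T)

/-- With `M = m + 2`: `(b + C) M` comes from the drift, the rest from the second-order remainder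
`M.choose 2 * u ^ 2 * (a + |u|) ^ m`. -/
def momentRate (b C σ T : ℝ) (m : ℕ) : ℝ :=
  (b + C) * (m + 2) + (m + 2).choose 2 * (4 * σ ^ 2) * stepGrowth b C σ T ^ m

theorem stepGrowth_nonneg {b C σ T : ℝ} (hb : 0 ≤ b) (hC : 0 ≤ C) (hσ : 0 ≤ σ) (hT : 0 ≤ T) :
    0 ≤ stepGrowth b C σ T := by
  unfold stepGrowth; positivity

theorem momentRate_nonneg {b C σ T : ℝ} (hb : 0 ≤ b) (hC : 0 ≤ C) (hσ : 0 ≤ σ) (hT : 0 ≤ T)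
    (m : ℕ) : 0 ≤ momentRate b C σ T m := by
  have := stepGrowth_nonneg hb hC hσ hT
  unfold momentRate; positivity

section OneStep

variable {b C σ T h y w : ℝ}

theorem abs_noise_le (hσ : 0 ≤ σ) (hy : 0 ≤ y) (hh : 0 ≤ h) (hw : |w| ≤ 2) :
    |σ * √(y * h) * w| ≤ σ * (y + h) := by
  rw [abs_mul, abs_of_nonneg (by positivity)]
  calc σ * √(y * h) * |w| ≤ σ * √(y * h) * 2 := by gcongr
    _ ≤ σ * (y + h) := by nlinarith [two_mul_sqrt_mul_le_add hy hh]

theorem noise_sq_le (hy : 0 ≤ y) (hh : 0 ≤ h) (hw : |w| ≤ 2) :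
    (σ * √(y * h) * w) ^ 2 ≤ 4 * σ ^ 2 * h * (1 + y) := by
  have hw2 : w ^ 2 ≤ 4 := by nlinarith [sq_abs w, abs_nonneg w]
  rw [mul_pow, mul_pow, Real.sq_sqrt (mul_nonneg hy hh)]
  nlinarith [mul_le_mul_of_nonneg_left hw2 (by positivity : 0 ≤ σ ^ 2 * (y * h)),
    mul_nonneg (sq_nonneg σ) hh]

theorem one_add_drift_le (hb : 0 ≤ b) (hC : 0 ≤ C) (hy : 0 ≤ y) (hh : 0 ≤ h) :
    1 + ((1 + b * h) * y + C * h) ≤ (1 + (b + C) * h) * (1 + y) := by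
  nlinarith [mul_nonneg (mul_nonneg hC hh) hy]

theorem one_add_drift_add_abs_noise_le (hb : 0 ≤ b) (hC : 0 ≤ C) (hσ : 0 ≤ σ) (hy : 0 ≤ y)
    (hh : 0 ≤ h) (hhT : h ≤ T) (hw : |w| ≤ 2) :
    1 + ((1 + b * h) * y + C * h) + |σ * √(y * h) * w| ≤ stepGrowth b C σ T * (1 + y) := by
  have hdrift := one_add_drift_le hb hC hy hh
  have hnoise := abs_noise_le hσ hy hh hw
  unfold stepGrowth
  have hbC := add_nonneg hb hC
  nlinarith [mul_le_mul_of_nonneg_left hhT hbC, mul_nonneg hbC hy,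
    mul_le_mul_of_nonneg_right (mul_le_mul_of_nonneg_left hhT hbC) hy,
    mul_le_mul_of_nonneg_left hhT hσ, mul_nonneg hσ hy,
    mul_nonneg (mul_nonneg hσ hy) (hh.trans hhT)]

theorem one_add_drift_add_noise_pow_le (hb : 0 ≤ b) (hC : 0 ≤ C) (hσ : 0 ≤ σ) (hy : 0 ≤ y)
    (hh : 0 ≤ h) (hhT : h ≤ T) (hw : |w| ≤ 2)
    (hpos : 0 ≤ 1 + ((1 + b * h) * y + C * h) + σ * √(y * h) * w) (m : ℕ) :
    (1 + ((1 + b * h) * y + C * h) + σ * √(y * h) * w) ^ (m + 2)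
      ≤ exp (momentRate b C σ T m * h) * (1 + y) ^ (m + 2)
        + (m + 2) * (1 + ((1 + b * h) * y + C * h)) ^ (m + 1) * (σ * √(y * h)) * w := by
  set a := 1 + ((1 + b * h) * y + C * h)
  set u := σ * √(y * h) * w
  set D := ((m + 2).choose 2 : ℝ) * (4 * σ ^ 2) * stepGrowth b C σ T ^ m with hD_def
  have hL := stepGrowth_nonneg hb hC hσ (hh.trans hhT)
  have hD : 0 ≤ D := by positivity
  have ha : 0 ≤ a := by positivity
  have hZ : 1 ≤ 1 + y := by linarith
  have hdrift : a ^ (m + 2) ≤ exp ((b + C) * (m + 2) * h) * (1 + y) ^ (m + 2) :=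
    calc a ^ (m + 2) ≤ ((1 + (b + C) * h) * (1 + y)) ^ (m + 2) :=
          pow_le_pow_left₀ ha (one_add_drift_le hb hC hy hh) _
      _ ≤ (exp ((b + C) * h) * (1 + y)) ^ (m + 2) := by
          gcongr; linarith [add_one_le_exp ((b + C) * h)]
      _ = exp ((b + C) * (m + 2) * h) * (1 + y) ^ (m + 2) := by
          rw [mul_pow, ← Real.exp_nat_mul]; push_cast; ring_nf
  have hremainder :
      ((m + 2).choose 2 : ℝ) * u ^ 2 * (a + |u|) ^ m ≤ D * h * (1 + y) ^ (m + 2) :=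
    calc ((m + 2).choose 2 : ℝ) * u ^ 2 * (a + |u|) ^ m
        ≤ (m + 2).choose 2 * (4 * σ ^ 2 * h * (1 + y))
            * (stepGrowth b C σ T * (1 + y)) ^ m := by
          gcongr
          · exact noise_sq_le hy hh hw
          · exact one_add_drift_add_abs_noise_le hb hC hσ hy hh hhT hw
      _ = D * h * (1 + y) ^ (m + 1) := by rw [hD_def, mul_pow]; ring
      _ ≤ D * h * (1 + y) ^ (m + 2) :=
          mul_le_mul_of_nonneg_left (pow_le_pow_right₀ hZ (by omega)) (by positivity)
  have hrate : exp ((b + C) * (m + 2) * h) + D * h ≤ exp (momentRate b C σ T m * h) :=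
    calc exp ((b + C) * (m + 2) * h) + D * h
        ≤ exp ((b + C) * (m + 2) * h) * (1 + D * h) := by
          nlinarith [one_le_exp (by positivity : 0 ≤ (b + C) * (m + 2) * h),
            (by positivity : 0 ≤ D * h)]
      _ ≤ exp ((b + C) * (m + 2) * h) * exp (D * h) := by
          gcongr; linarith [add_one_le_exp (D * h)]
      _ = exp (momentRate b C σ T m * h) := by rw [← exp_add, momentRate, hD_def]; ring_nf
  have htaylor := add_pow_le_taylor ha hpos m
  have hZpow : 0 ≤ (1 + y) ^ (m + 2) := by positivity
  nlinarith [mul_le_mul_of_nonneg_right hrate hZpow]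

end OneStep

theorem measurable_comap_pi_last {Ω : Type*} (Y : ℕ → Ω → ℝ) (k : ℕ) :
    Measurable[MeasurableSpace.comap (fun ω (i : Fin (k + 1)) => Y i ω) MeasurableSpace.pi]
      (Y k) :=
  (measurable_pi_apply (Fin.last k)).comp (comap_measurable fun ω (i : Fin (k + 1)) => Y i ω)

section Probability

variable {Ω : Type*} {m0 : MeasurableSpace Ω} {μ : Measure Ω} {b C σ T h : ℝ}

theorem ae_one_add_le_stepGrowth_pow (hb : 0 ≤ b) (hC : 0 ≤ C) (hσ : 0 ≤ σ) (hh : 0 ≤ h)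
    (hhT : h ≤ T) {Y W : ℕ → Ω → ℝ} {Y₀ : ℝ} {N : ℕ} (hY0 : ∀ ω, Y 0 ω = Y₀)
    (hYnn : ∀ n ω, 0 ≤ Y n ω) (hWb : ∀ n ω, |W (n + 1) ω| ≤ 2)
    (hrec : ∀ n < N, ∀ᵐ ω ∂μ,
      Y (n + 1) ω ≤ (1 + b * h) * Y n ω + C * h + σ * √(Y n ω * h) * W (n + 1) ω) :
    ∀ n ≤ N, ∀ᵐ ω ∂μ, 1 + Y n ω ≤ stepGrowth b C σ T ^ n * (1 + Y₀) := by
  have hL := stepGrowth_nonneg hb hC hσ (hh.trans hhT)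
  intro n
  induction n with
  | zero => exact fun _ => .of_forall fun ω => by simp [hY0]
  | succ n ih =>
    intro hn
    filter_upwards [hrec n hn, ih (by omega)] with ω hstep hbound
    have hnoise := one_add_drift_add_abs_noise_le hb hC hσ (hYnn n ω) hh hhT (hWb n ω)
    calc 1 + Y (n + 1) ω ≤ stepGrowth b C σ T * (1 + Y n ω) := by
          linarith [le_abs_self (σ * √(Y n ω * h) * W (n + 1) ω)]
      _ ≤ stepGrowth b C σ T ^ (n + 1) * (1 + Y₀) := by
          rw [pow_succ', mul_assoc]; gcongr

theorem lintegral_ofReal_rpow_le {f : Ω → ℝ} (hf0 : ∀ ω, 0 ≤ f ω) {p : ℝ} {k : ℕ} (hp : 0 ≤ p)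
    (hpk : p ≤ k) (hint : Integrable (fun ω => (1 + f ω) ^ k) μ) :
    ∫⁻ ω, ENNReal.ofReal (f ω ^ p) ∂μ ≤ ENNReal.ofReal (∫ ω, (1 + f ω) ^ k ∂μ) :=
  calc ∫⁻ ω, ENNReal.ofReal (f ω ^ p) ∂μ ≤ ∫⁻ ω, ENNReal.ofReal ((1 + f ω) ^ k) ∂μ := by
        gcongr with ω
        exact Real.rpow_le_one_add_pow (hf0 ω) hp hpk
    _ = ENNReal.ofReal (∫ ω, (1 + f ω) ^ k ∂μ) :=
        (ofReal_integral_eq_lintegral_ofReal hint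
          (.of_forall fun ω => pow_nonneg (by linarith [hf0 ω]) _)).symm

variable [IsFiniteMeasure μ]

theorem integrable_comp_of_ae_mem_Icc {f : Ω → ℝ} {φ : ℝ → ℝ} (hφ : Continuous φ)
    (hf : AEStronglyMeasurable f μ) {l c : ℝ} (hfb : ∀ᵐ ω ∂μ, f ω ∈ Set.Icc l c) :
    Integrable (fun ω => φ (f ω)) μ := by
  obtain ⟨B, hB⟩ := (isCompact_Icc.image hφ).isBounded.exists_norm_le
  exact .of_bound (hφ.comp_aestronglyMeasurable hf) B
    (hfb.mono fun ω hω => hB _ ⟨_, hω, rfl⟩)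

theorem integrable_one_add_pow_of_ae_le {f : Ω → ℝ} (hf : AEStronglyMeasurable f μ)
    (hf0 : ∀ ω, 0 ≤ f ω) {c : ℝ} (hfc : ∀ᵐ ω ∂μ, 1 + f ω ≤ c) (k : ℕ) :
    Integrable (fun ω => (1 + f ω) ^ k) μ :=
  integrable_comp_of_ae_mem_Icc (φ := fun t => (1 + t) ^ k) (by fun_prop) hf
    (hfc.mono fun ω hω => ⟨hf0 ω, by linarith [hf0 ω]⟩)

theorem integral_mul_eq_zero_of_condExp_eq_zero {F : MeasurableSpace Ω} (hF : F ≤ m0)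
    {G W : Ω → ℝ} (hG : StronglyMeasurable[F] G) (hGW : Integrable (fun ω => G ω * W ω) μ)
    (hW : Integrable W μ) (hW0 : μ[W | F] =ᵐ[μ] 0) : ∫ ω, G ω * W ω ∂μ = 0 := by
  have hpull : μ[G * W | F] =ᵐ[μ] 0 := by
    filter_upwards [condExp_mul_of_stronglyMeasurable_left hG hGW hW, hW0] with ω h1 h2
    simp [h1, h2]
  calc ∫ ω, G ω * W ω ∂μ = ∫ ω, μ[G * W | F] ω ∂μ := (integral_condExp hF).symm
    _ = 0 := by simp [integral_congr_ae hpull]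

theorem integral_le_of_ae_le_add_mul_condExp_eq_zero {F : MeasurableSpace Ω} (hF : F ≤ m0)
    {f g G W : Ω → ℝ} (hf : Integrable f μ) (hg : Integrable g μ) (hG : StronglyMeasurable[F] G)
    (hGW : Integrable (fun ω => G ω * W ω) μ) (hW : Integrable W μ) (hW0 : μ[W | F] =ᵐ[μ] 0)
    (hle : ∀ᵐ ω ∂μ, f ω ≤ g ω + G ω * W ω) : ∫ ω, f ω ∂μ ≤ ∫ ω, g ω ∂μ :=
  calc ∫ ω, f ω ∂μ ≤ ∫ ω, g ω + G ω * W ω ∂μ := integral_mono_ae hf (hg.add hGW) hle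
    _ = ∫ ω, g ω ∂μ := by
      rw [integral_add hg hGW, integral_mul_eq_zero_of_condExp_eq_zero hF hG hGW hW hW0,
        add_zero]

theorem integral_one_add_pow_succ_le (hb : 0 ≤ b) (hC : 0 ≤ C) (hσ : 0 ≤ σ) (hh : 0 ≤ h)
    (hhT : h ≤ T) {F : MeasurableSpace Ω} (hF : F ≤ m0) {y y' w : Ω → ℝ}
    (hy : Measurable[F] y) (hy' : Measurable[m0] y') (hw : Measurable[m0] w)
    (hy0 : ∀ ω, 0 ≤ y ω) (hy'0 : ∀ ω, 0 ≤ y' ω) (hwb : ∀ ω, |w ω| ≤ 2) {c c' : ℝ}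
    (hyc : ∀ᵐ ω ∂μ, 1 + y ω ≤ c) (hy'c : ∀ᵐ ω ∂μ, 1 + y' ω ≤ c') (hw0 : μ[w | F] =ᵐ[μ] 0)
    (hstep : ∀ᵐ ω ∂μ, y' ω ≤ (1 + b * h) * y ω + C * h + σ * √(y ω * h) * w ω) (m : ℕ) :
    ∫ ω, (1 + y' ω) ^ (m + 2) ∂μ
      ≤ exp (momentRate b C σ T m * h) * ∫ ω, (1 + y ω) ^ (m + 2) ∂μ := by
  set G : ℝ → ℝ := fun t =>
    (m + 2) * (1 + ((1 + b * h) * t + C * h)) ^ (m + 1) * (σ * √(t * h))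
  have hGc : Continuous G := by fun_prop
  have hym : Measurable[m0] y := hy.mono hF le_rfl
  have iy := integrable_one_add_pow_of_ae_le hym.aestronglyMeasurable hy0 hyc (m + 2)
  have iy' := integrable_one_add_pow_of_ae_le hy'.aestronglyMeasurable hy'0 hy'c (m + 2)
  have iW : Integrable w μ :=
    .of_bound hw.aestronglyMeasurable 2 (.of_forall fun ω => by simpa using hwb ω)
  have iGW : Integrable (fun ω => G (y ω) * w ω) μ :=
    (integrable_comp_of_ae_mem_Icc hGc hym.aestronglyMeasurable
      (hyc.mono fun ω hω => ⟨hy0 ω, by linarith⟩)).mul_bdd hw.aestronglyMeasurable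
      (.of_forall fun ω => by simpa using hwb ω)
  refine (integral_le_of_ae_le_add_mul_condExp_eq_zero hF iy' (iy.const_mul _)
    (hGc.measurable.comp hy).stronglyMeasurable iGW iW hw0 ?_).trans_eq
    (integral_const_mul _ _)
  filter_upwards [hstep] with ω hω
  calc (1 + y' ω) ^ (m + 2)
      ≤ (1 + ((1 + b * h) * y ω + C * h) + σ * √(y ω * h) * w ω) ^ (m + 2) :=
        pow_le_pow_left₀ (by linarith [hy'0 ω]) (by linarith) _
    _ ≤ _ := one_add_drift_add_noise_pow_le hb hC hσ (hy0 ω) hh hhT (hwb ω)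
        (by linarith [hy'0 ω]) m

end Probability

theorem chain_uniform_moment_bound
    (b C σ T Y₀ : ℝ) (hb : 0 < b) (hC : 0 < C) (hσ : 0 < σ) (hT : 0 < T)
    (hY₀ : 0 ≤ Y₀) (p : ℝ) (hp : 1 ≤ p) :
    ∃ Cp : ℝ, 0 < Cp ∧
      ∀ (N : ℕ), 1 ≤ N →
      ∀ (Ω : Type) (_ : MeasurableSpace Ω) (μ : Measure Ω),
        IsProbabilityMeasure μ →
        ∀ (Y W : ℕ → Ω → ℝ),
          (∀ n, Measurable (Y n)) →
          (∀ n, Measurable (W n)) →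
          (∀ ω, Y 0 ω = Y₀) →
          (∀ n ω, 0 ≤ Y n ω) →
          (∀ n ω, |W (n + 1) ω| ≤ 2) →
          (∀ n < N,
            μ[W (n + 1) |
                MeasurableSpace.comap (fun ω => (fun i : Fin (n + 1) => Y i ω))
                  MeasurableSpace.pi] =ᵐ[μ] 0) →
          (∀ n < N, ∀ᵐ ω ∂μ,
            Y (n + 1) ω ≤
              (1 + b * (T / N)) * Y n ω + C * (T / N) +
                σ * Real.sqrt (Y n ω * (T / N)) * W (n + 1) ω) →
          ∀ n ≤ N, (∫⁻ ω, ENNReal.ofReal (Y n ω ^ p) ∂μ) ≤ ENNReal.ofReal Cp := by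
  set m := ⌈p⌉₊
  set K := momentRate b C σ T m
  refine ⟨exp (K * T) * (1 + Y₀) ^ (m + 2), by positivity, ?_⟩
  intro N hN Ω _ μ _ Y W hYm hWm hY0 hYnn hWb hWcond hrec n hn
  have hN' : (1 : ℝ) ≤ N := by exact_mod_cast hN
  have hh : 0 ≤ T / N := by positivity
  have hhT : T / N ≤ T := div_le_self hT.le hN'
  have hbound := ae_one_add_le_stepGrowth_pow hb.le hC.le hσ.le hh hhT hY0 hYnn hWb hrec
  have hstep (k : ℕ) (hk : k < N) : ∫ ω, (1 + Y (k + 1) ω) ^ (m + 2) ∂μ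
      ≤ exp (K * (T / N)) * ∫ ω, (1 + Y k ω) ^ (m + 2) ∂μ :=
    integral_one_add_pow_succ_le hb.le hC.le hσ.le hh hhT
      (measurable_pi_lambda (fun ω (i : Fin (k + 1)) => Y i ω) fun i => hYm i).comap_le
      (measurable_comap_pi_last Y k) (hYm (k + 1)) (hWm (k + 1)) (hYnn k) (hYnn (k + 1)) (hWb k)
      (hbound k hk.le) (hbound (k + 1) hk) (hWcond k hk) (hrec k hk) m
  have hmoment := le_exp_mul_of_le_exp_mul_succ (x := fun k => ∫ ω, (1 + Y k ω) ^ (m + 2) ∂μ)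
    (momentRate_nonneg hb.le hC.le hσ.le hT.le m)
    (integral_nonneg fun ω => pow_nonneg (by linarith [hYnn 0 ω]) _)
    hh (by rw [mul_div_cancel₀ _ (by positivity)]) hstep n hn
  simp only [hY0, integral_const, probReal_univ, one_smul] at hmoment
  calc ∫⁻ ω, ENNReal.ofReal (Y n ω ^ p) ∂μ
      ≤ ENNReal.ofReal (∫ ω, (1 + Y n ω) ^ (m + 2) ∂μ) :=
        lintegral_ofReal_rpow_le (hYnn n) (by linarith) (by push_cast; linarith [Nat.le_ceil p])
          (integrable_one_add_pow_of_ae_le (hYm n).aestronglyMeasurable (hYnn n) (hbound n hn) _)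
    _ ≤ ENNReal.ofReal (exp (K * T) * (1 + Y₀) ^ (m + 2)) := ENNReal.ofReal_le_ofReal hmoment
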